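/- arXiv:2011.03809 — 7 statements merged into one kernel-verified Lean document; each statement's English description precedes it below -/
import Mathlib

section
/- Every hermitian diagonally dominant matrix B ∈ M_d(ℂ) (i.e., B = B* and B_{ii} ≥ Σ_{j≠i} |B_{ij}| for all i) can be written as a sum of positive semidefinite matrices each supported on at most a 2×2 principal submatrix; in particular, B is positive semidefinite with factor width at most 2. -/
/-!
Write `B = D + A` with `D` diagonal and `A` off-diagonal. For `z = A i j / 2` the vector
`v = (z / √|z|) eᵢ + √|z| eⱼ` gives `v v* = |z| Eᵢᵢ + z Eᵢⱼ + z̄ Eⱼᵢ + |z| Eⱼⱼ`; summed over all ordered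
pairs this is `A` plus the diagonal matrix of absolute row sums of `A`, by hermiticity. Diagonal
dominance says exactly that what is left of `D` is diagonal with nonnegative entries `rᵢ`, i.e.
a sum of the rank-one matrices of `√rᵢ eᵢ`.
-/

open Matrix Finset
open scoped ComplexOrder ComplexConjugate

section

variable {n : Type*}

theorem card_filter_ne_zero_le_of_support_subset [Fintype n] {v : n → ℂ} {s : Finset n}
    (h : Function.support v ⊆ s) : (univ.filter (fun k => v k ≠ 0)).card ≤ s.card :=
  card_le_card fun _ hk => h (mem_filter.1 hk).2

variable [DecidableEq n]

theorem Matrix.vecMulVec_single_single {α : Type*} [MulZeroClass α] (i j : n) (x y : α) :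
    vecMulVec (Pi.single i x) (Pi.single j y) = single i j (x * y) := by
  ext a b
  simp only [vecMulVec_apply, Pi.single_apply, single_apply]
  split_ifs <;> simp_all

noncomputable def pairVec (i j : n) (z : ℂ) : n → ℂ :=
  Pi.single i (z / (√‖z‖ : ℂ)) + Pi.single j (√‖z‖ : ℂ)

theorem vecMulVec_pairVec (i j : n) (z : ℂ) :
    vecMulVec (pairVec i j z) (star (pairVec i j z)) =
      single i i (‖z‖ : ℂ) + single i j z + single j i (conj z) + single j j (‖z‖ : ℂ) := by
  simp only [pairVec, star_add, ← Pi.single_star, vecMulVec_add, add_vecMulVec,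
    vecMulVec_single_single, Complex.star_def]
  set s : ℂ := (√‖z‖ : ℂ)
  have hss : s * conj s = ‖z‖ := by
    simp only [s, Complex.conj_ofReal, ← Complex.ofReal_mul, Real.mul_self_sqrt (norm_nonneg z)]
  have hzs : z / s * conj s = z := by
    rcases eq_or_ne z 0 with rfl | hz
    · simp
    · rw [Complex.conj_ofReal, div_mul_cancel₀]
      simpa [s] using hz
  have hsz : s * conj (z / s) = conj z := by
    conv_rhs => rw [← hzs]
    rw [map_mul, Complex.conj_conj, mul_comm]
  have hzz : z / s * conj (z / s) = ‖z‖ := by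
    rcases eq_or_ne z 0 with rfl | hz
    · simp
    · rw [map_div₀, div_mul_div_comm, Complex.mul_conj', hss, pow_two, mul_div_assoc, div_self,
        mul_one]
      simpa using hz
  rw [hss, hzs, hsz, hzz]
  abel

theorem card_filter_pairVec_ne_zero_le_two [Fintype n] (i j : n) (z : ℂ) :
    (univ.filter (fun k => pairVec i j z k ≠ 0)).card ≤ 2 := by
  refine (card_filter_ne_zero_le_of_support_subset ?_).trans (card_le_two (a := i) (b := j))
  refine (Function.support_add _ _).trans (Set.union_subset ?_ ?_) <;>
    refine Pi.support_single_subset.trans ?_ <;> simp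

theorem Matrix.IsHermitian.sum_vecMulVec_pairVec [Fintype n] {A : Matrix n n ℂ}
    (hA : A.IsHermitian) :
    ∑ i, ∑ j, vecMulVec (pairVec i j (A i j / 2)) (star (pairVec i j (A i j / 2))) =
      A + diagonal (fun i => ((∑ j, ‖A i j‖ : ℝ) : ℂ)) := by
  have hconj : ∀ i j, conj (A j i) = A i j := fun i j => hA.apply i j
  have hnorm : ∀ i j, ‖A j i‖ = ‖A i j‖ := fun i j => by rw [← hconj, Complex.norm_conj]
  ext a b
  simp only [vecMulVec_pairVec, add_apply, sum_apply, single_apply, diagonal_apply]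
  simp only [Complex.norm_div, Complex.norm_ofNat, Complex.ofReal_div, Complex.ofReal_ofNat,
    ite_and, map_div₀, hconj, sum_add_distrib, sum_ite_irrel, sum_const_zero, sum_ite_eq',
    mem_univ, ↓reduceIte, hnorm, Complex.ofReal_sum]
  split_ifs <;> simp only [map_ofNat, ← sum_div] <;> ring

theorem Matrix.sum_vecMulVec_single_sqrt [Fintype n] {r : n → ℝ} (hr : ∀ i, 0 ≤ r i) :
    ∑ i, vecMulVec (Pi.single i (√(r i) : ℂ)) (star (Pi.single i (√(r i) : ℂ))) =
      diagonal (fun i => (r i : ℂ)) := by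
  simp only [← Pi.single_star, vecMulVec_single_single, Complex.star_def, Complex.conj_ofReal,
    ← Complex.ofReal_mul, Real.mul_self_sqrt (hr _), sum_single_eq_diagonal]

theorem Matrix.IsHermitian.exists_sum_vecMulVec_of_diagDominant [Fintype n]
    {B : Matrix n n ℂ} (hB : B.IsHermitian)
    (hdd : ∀ i, ∑ j ∈ univ.filter (· ≠ i), ‖B i j‖ ≤ (B i i).re) :
    ∃ (N : ℕ) (v : Fin N → n → ℂ), (∀ m, (univ.filter (fun k => v m k ≠ 0)).card ≤ 2) ∧
      B = ∑ m, vecMulVec (v m) (star (v m)) := by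
  set A := B - diagonal B.diag
  have hA : A.IsHermitian := hB.sub (isHermitian_diagonal_iff.2 fun i => hB.apply i i)
  have hrow : ∀ i, ∑ j, ‖A i j‖ = ∑ j ∈ univ.filter (· ≠ i), ‖B i j‖ := fun i => by
    rw [sum_filter]
    refine sum_congr rfl fun j _ => ?_
    rcases eq_or_ne j i with rfl | hji
    · simp [A]
    · simp [A, diagonal_apply_ne _ hji.symm, hji]
  set r : n → ℝ := fun i => (B i i).re - ∑ j ∈ univ.filter (· ≠ i), ‖B i j‖
  have hB_eq :
      B = diagonal (fun i => (r i : ℂ)) + (A + diagonal (fun i => ((∑ j, ‖A i j‖ : ℝ) : ℂ))) := by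
    have hdiag : diagonal B.diag = diagonal (fun i => (r i : ℂ)) +
        diagonal (fun i => ((∑ j ∈ univ.filter (· ≠ i), ‖B i j‖ : ℝ) : ℂ)) := by
      rw [diagonal_add, ← hB.coe_re_diag]
      simp [r]
    simp only [hrow, A]
    rw [hdiag]
    abel
  let v : n ⊕ n × n → n → ℂ :=
    Sum.elim (fun i => Pi.single i (√(r i) : ℂ)) (fun p => pairVec p.1 p.2 (A p.1 p.2 / 2))
  have hv : ∀ m, (univ.filter (fun k => v m k ≠ 0)).card ≤ 2 := by
    rintro (i | ⟨i, j⟩)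
    · exact (card_filter_ne_zero_le_of_support_subset (s := {i})
        (by simpa [v] using Pi.support_single_subset)).trans (by simp)
    · exact card_filter_pairVec_ne_zero_le_two i j _
  have hsum : B = ∑ m, vecMulVec (v m) (star (v m)) := by
    rw [Fintype.sum_sum_type, Fintype.sum_prod_type]
    simp only [v, Sum.elim_inl, Sum.elim_inr]
    rwa [sum_vecMulVec_single_sqrt (fun i => sub_nonneg.2 (hdd i)), hA.sum_vecMulVec_pairVec]
  let e := Fintype.equivFin (n ⊕ n × n)
  exact ⟨_, v ∘ e.symm, fun m => hv _, hsum.trans (e.symm.sum_comp _).symm⟩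

end

/-- Every hermitian diagonally dominant matrix `B ∈ M_d(ℂ)` can be written as a
sum of positive semidefinite matrices each supported on at most a 2×2 principal submatrix;
in particular `B` is positive semidefinite with factor width at most 2. -/
theorem hermitian_diagonally_dominant_factor_width_two {d : ℕ}
    (B : Matrix (Fin d) (Fin d) ℂ) (hherm : B.IsHermitian)
    (hdd : ∀ i, ∑ j ∈ univ.filter (· ≠ i), ‖B i j‖ ≤ (B i i).re) :
    (∃ (N : ℕ) (P : Fin N → Matrix (Fin d) (Fin d) ℂ),
      (∀ n, (P n).PosSemidef) ∧
      (∀ n, ∃ s : Finset (Fin d), s.card ≤ 2 ∧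
        ∀ i j, (i ∉ s ∨ j ∉ s) → P n i j = 0) ∧
      B = ∑ n, P n) ∧
    B.PosSemidef ∧
    (∃ (N : ℕ) (v : Fin N → Fin d → ℂ),
      (∀ n, (univ.filter (fun i => v n i ≠ 0)).card ≤ 2) ∧
      B = ∑ n, vecMulVec (v n) (star (v n))) := by
  obtain ⟨N, v, hv, hB⟩ := hherm.exists_sum_vecMulVec_of_diagDominant hdd
  have hpsd : ∀ n, (vecMulVec (v n) (star (v n))).PosSemidef :=
    fun n => posSemidef_vecMulVec_self_star _
  refine ⟨⟨N, fun n => vecMulVec (v n) (star (v n)), hpsd,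
    fun n => ⟨_, hv n, fun i j hij => ?_⟩, hB⟩, hB ▸ posSemidef_sum univ fun n _ => hpsd n,
    N, v, hv, hB⟩
  simp only [mem_filter, mem_univ, true_and, not_not] at hij
  rcases hij with h | h <;> simp [vecMulVec_apply, h]
end

section
/- If B ∈ M_d(ℂ) is positive semidefinite and admits a decomposition B = Σ_n |v_n⟩⟨v_n| where each v_n has at most 2 nonzero coordinates, then the comparison matrix M(B), defined by M(B)_{ii} = |B_{ii}| and M(B)_{ij} = -|B_{ij}| for i ≠ j, is positive semidefinite. -/
/-!
A comparison matrix has nonpositive off-diagonal entries, so its quadratic form satisfies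
`|x| ⬝ M |x| ≤ x ⬝ M x` and it suffices to test nonnegative vectors. On those, `M(B)` dominates
`∑ₙ M(vₙ vₙ*)` entrywise: the diagonals agree, and off the diagonal this is the triangle
inequality. Finally `M(v v*) = 2 diag(|v|²) - |v| |v|ᵀ`, which is positive semidefinite by
Cauchy–Schwarz on the support of `v`, of size at most two.
-/

open Matrix Finset
open scoped ComplexOrder

namespace Matrix

variable {n : Type*}

section QuadraticForm

variable [Fintype n] {R : Type*} [CommRing R] [LinearOrder R] [IsStrictOrderedRing R]

lemma dotProduct_mulVec_le_of_le_of_nonneg {M M' : Matrix n n R} (h : ∀ i j, M i j ≤ M' i j)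
    {y : n → R} (hy : 0 ≤ y) : y ⬝ᵥ M *ᵥ y ≤ y ⬝ᵥ M' *ᵥ y := by
  simp only [dot_mulVec_eq_sum_sum]
  gcongr with j _ i _
  all_goals first | exact h i j | exact hy _

lemma abs_dotProduct_mulVec_abs_le {M : Matrix n n R} (hM : ∀ i j, i ≠ j → M i j ≤ 0)
    (x : n → R) : |x| ⬝ᵥ M *ᵥ |x| ≤ x ⬝ᵥ M *ᵥ x := by
  simp only [dot_mulVec_eq_sum_sum, Pi.abs_apply]
  refine sum_le_sum fun j _ => sum_le_sum fun i _ => ?_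
  rcases eq_or_ne i j with rfl | hij
  · rw [mul_right_comm, abs_mul_abs_self, mul_right_comm]
  · have : x i * x j ≤ |x i| * |x j| := (le_abs_self _).trans (abs_mul _ _).le
    nlinarith [hM i j hij]

end QuadraticForm

section PosSemidef

variable [Fintype n]

lemma posSemidef_of_offDiag_nonpos {M : Matrix n n ℝ} (hM : M.IsHermitian)
    (hoff : ∀ i j, i ≠ j → M i j ≤ 0) (hpos : ∀ y, 0 ≤ y → 0 ≤ y ⬝ᵥ M *ᵥ y) :
    M.PosSemidef :=
  .of_dotProduct_mulVec_nonneg hM fun x => by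
    simpa using (hpos |x| (abs_nonneg x)).trans (abs_dotProduct_mulVec_abs_le hoff x)

variable [DecidableEq n]

lemma dotProduct_smul_diagonal_sub_vecMulVec_mulVec (k : ℝ) (u y : n → ℝ) :
    y ⬝ᵥ (k • diagonal (u * u) - vecMulVec u u) *ᵥ y =
      k * ∑ i, (u i * y i) ^ 2 - (∑ i, u i * y i) ^ 2 := by
  simp only [sub_mulVec, dotProduct_sub, smul_mulVec, dotProduct_smul, vecMulVec_mulVec]
  simp [dotProduct, mulVec_diagonal, mul_sum, sq, mul_comm, mul_left_comm]

lemma posSemidef_smul_diagonal_sub_vecMulVec {k : ℕ} {u : n → ℝ} (hu : #{i | u i ≠ 0} ≤ k) :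
    ((k : ℝ) • diagonal (u * u) - vecMulVec u u).PosSemidef := by
  refine .of_dotProduct_mulVec_nonneg ?_ fun y => ?_
  · ext i j
    rcases eq_or_ne i j with rfl | hij
    · simp
    · simp [vecMulVec_apply, hij, hij.symm, mul_comm]
  rw [star_trivial, dotProduct_smul_diagonal_sub_vecMulVec_mulVec, sub_nonneg]
  set S : Finset n := {i | u i ≠ 0}
  calc (∑ i, u i * y i) ^ 2 = (∑ i ∈ S, u i * y i) ^ 2 := by
        rw [sum_filter_of_ne fun i _ h => left_ne_zero_of_mul h]
    _ ≤ #S * ∑ i ∈ S, (u i * y i) ^ 2 := sq_sum_le_card_mul_sum_sq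
    _ ≤ k * ∑ i ∈ S, (u i * y i) ^ 2 := by gcongr
    _ ≤ k * ∑ i, (u i * y i) ^ 2 := by gcongr; exact subset_univ S

end PosSemidef

variable [DecidableEq n] {𝕜 : Type*} [RCLike 𝕜]

def comparisonMatrix (A : Matrix n n 𝕜) : Matrix n n ℝ :=
  of fun i j => if i = j then ‖A i j‖ else -‖A i j‖

lemma comparisonMatrix_apply_nonpos_of_ne (A : Matrix n n 𝕜) {i j : n} (hij : i ≠ j) :
    comparisonMatrix A i j ≤ 0 := by
  simp [comparisonMatrix, hij]

lemma IsHermitian.comparisonMatrix {A : Matrix n n 𝕜} (hA : A.IsHermitian) :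
    (comparisonMatrix A).IsHermitian := by
  ext i j
  simp only [Matrix.comparisonMatrix, conjTranspose_apply, of_apply, star_trivial,
    eq_comm (a := j), ← hA.apply i j, norm_star]

lemma comparisonMatrix_vecMulVec_star_self (v : n → 𝕜) :
    comparisonMatrix (vecMulVec v (star v)) =
      (2 : ℝ) • diagonal ((‖v ·‖) * (‖v ·‖)) - vecMulVec (‖v ·‖) (‖v ·‖) := by
  ext i j
  rcases eq_or_ne i j with rfl | hij
  · simp [comparisonMatrix, vecMulVec_apply]
    ring
  · simp [comparisonMatrix, vecMulVec_apply, hij]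

lemma sum_comparisonMatrix_vecMulVec_star_self_le {ι : Type*} [Fintype ι] (v : ι → n → 𝕜)
    (i j : n) :
    (∑ k, comparisonMatrix (vecMulVec (v k) (star (v k)))) i j ≤
      comparisonMatrix (∑ k, vecMulVec (v k) (star (v k))) i j := by
  simp only [Matrix.sum_apply, comparisonMatrix, of_apply, vecMulVec_apply, Pi.star_apply]
  split_ifs with hij
  · subst hij
    simp only [RCLike.star_def, RCLike.mul_conj, norm_pow, RCLike.norm_ofReal, abs_norm]
    norm_cast
    exact le_abs_self _
  · rw [sum_neg_distrib, neg_le_neg_iff]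
    exact norm_sum_le _ _

variable [Fintype n]

lemma posSemidef_comparisonMatrix_vecMulVec_star_self {v : n → 𝕜} (hv : #{i | v i ≠ 0} ≤ 2) :
    (comparisonMatrix (vecMulVec v (star v))).PosSemidef := by
  rw [comparisonMatrix_vecMulVec_star_self]
  exact_mod_cast posSemidef_smul_diagonal_sub_vecMulVec (k := 2) (by simpa using hv)

end Matrix

/-- If `B` is PSD with a factor-width-2 decomposition, then its comparison
matrix `M(B)` (with `M(B)_{ii} = |B_{ii}|`, `M(B)_{ij} = -|B_{ij}|` for `i ≠ j`) is PSD. -/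
theorem comparison_matrix_posSemidef_of_factor_width_two {d : ℕ}
    (B : Matrix (Fin d) (Fin d) ℂ) (hB : B.PosSemidef)
    (N : ℕ) (v : Fin N → Fin d → ℂ)
    (hsupp : ∀ n, (univ.filter (fun i => v n i ≠ 0)).card ≤ 2)
    (hdec : B = ∑ n, vecMulVec (v n) (star (v n))) :
    (Matrix.of fun i j =>
      if i = j then ‖B i j‖ else -‖B i j‖ :
      Matrix (Fin d) (Fin d) ℝ).PosSemidef := by
  show (comparisonMatrix B).PosSemidef
  refine posSemidef_of_offDiag_nonpos hB.1.comparisonMatrix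
    (fun i j => comparisonMatrix_apply_nonpos_of_ne B) fun y hy => ?_
  calc 0 ≤ ∑ n, y ⬝ᵥ comparisonMatrix (vecMulVec (v n) (star (v n))) *ᵥ y :=
        sum_nonneg fun n _ => by
          simpa using
            (posSemidef_comparisonMatrix_vecMulVec_star_self (hsupp n)).dotProduct_mulVec_nonneg y
    _ = y ⬝ᵥ (∑ n, comparisonMatrix (vecMulVec (v n) (star (v n)))) *ᵥ y := by
        simp only [sum_mulVec, dotProduct_sum]
    _ ≤ y ⬝ᵥ comparisonMatrix B *ᵥ y :=
        dotProduct_mulVec_le_of_le_of_nonneg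
          (hdec ▸ sum_comparisonMatrix_vecMulVec_star_self_le v) hy
end

section
/- If a matrix pair (A,B) with equal diagonals is pairwise completely positive, i.e., A = Σ_n |v_n⊙ v̄_n⟩⟨w_n⊙ w̄_n| and B = Σ_n |v_n⊙ w_n⟩⟨v_n⊙ w_n| for vectors v_n, w_n ∈ ℂ^d, then A has nonnegative entries, B is positive semidefinite, and A_{ij}A_{ji} ≥ |B_{ij}|² for all i, j. -/
open Matrix Finset
open scoped ComplexOrder

/-!
Every entry of `A` is a sum of products of squared moduli `|v_n i|² |w_n j|²`, and `B` is a sum of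
rank-one Gram matrices, hence positive semidefinite. For the last inequality, the triangle
inequality bounds `|B_ij|` by `∑ₙ (|v_n i| |w_n j|) (|v_n j| |w_n i|)`, and Cauchy–Schwarz bounds
the square of that sum by `A_ij A_ji`.
-/

section

variable {ι κ : Type*} [Fintype κ]

theorem vecMulVec_mul_star_apply (x y : ι → ℂ) (i j : ι) :
    vecMulVec (fun i => x i * star (x i)) (star fun j => y j * star (y j)) i j
      = ((‖x i‖ * ‖y j‖) ^ 2 : ℝ) := by
  simp [vecMulVec_apply, Complex.mul_conj, Complex.normSq_eq_norm_sq]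
  ring

theorem sum_vecMulVec_mul_star_apply (v w : κ → ι → ℂ) (i j : ι) :
    (∑ n, vecMulVec (fun i => v n i * star (v n i)) (star fun j => w n j * star (w n j))) i j
      = ((∑ n, (‖v n i‖ * ‖w n j‖) ^ 2 : ℝ) : ℂ) := by
  simp only [Matrix.sum_apply, vecMulVec_mul_star_apply, Complex.ofReal_sum]

theorem norm_sum_vecMulVec_self_star_apply_le (x : κ → ι → ℂ) (i j : ι) :
    ‖(∑ n, vecMulVec (x n) (star (x n))) i j‖ ≤ ∑ n, ‖x n i‖ * ‖x n j‖ := by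
  simp only [Matrix.sum_apply, vecMulVec_apply, Pi.star_apply, RCLike.star_def]
  refine (norm_sum_le _ _).trans_eq (sum_congr rfl fun n _ => ?_)
  rw [norm_mul, Complex.norm_conj]

theorem norm_sum_vecMulVec_mul_sq_le (v w : κ → ι → ℂ) (i j : ι) :
    ‖(∑ n, vecMulVec (fun i => v n i * w n i) (star fun j => v n j * w n j)) i j‖ ^ 2
      ≤ (∑ n, (‖v n i‖ * ‖w n j‖) ^ 2) * ∑ n, (‖v n j‖ * ‖w n i‖) ^ 2 := by
  have h_triangle := norm_sum_vecMulVec_self_star_apply_le (fun n i => v n i * w n i) i j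
  calc _ ≤ (∑ n, (‖v n i‖ * ‖w n j‖) * (‖v n j‖ * ‖w n i‖)) ^ 2 := by
        refine pow_le_pow_left₀ (norm_nonneg _) (h_triangle.trans_eq (sum_congr rfl fun n _ => ?_)) 2
        simp only [norm_mul]
        ring
    _ ≤ _ := sum_mul_sq_le_sq_mul_sq _ _ _

end

theorem pcp_necessary_conditions_general {d : ℕ}
    (A B : Matrix (Fin d) (Fin d) ℂ)
    (N : ℕ) (v w : Fin N → Fin d → ℂ)
    (hA : A = ∑ n, vecMulVec (fun i => v n i * star (v n i))
                    (star fun j => w n j * star (w n j)))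
    (hB : B = ∑ n, vecMulVec (fun i => v n i * w n i)
                    (star fun j => v n j * w n j)) :
    (∀ i j, (A i j).im = 0 ∧ 0 ≤ (A i j).re) ∧
    B.PosSemidef ∧
    (∀ i j, ‖B i j‖ ^ 2 ≤ (A i j).re * (A j i).re) := by
  have hA_apply (i j : Fin d) : A i j = ((∑ n, (‖v n i‖ * ‖w n j‖) ^ 2 : ℝ) : ℂ) := by
    rw [hA, sum_vecMulVec_mul_star_apply]
  refine ⟨fun i j => ?_, ?_, fun i j => ?_⟩
  · rw [hA_apply, Complex.ofReal_im, Complex.ofReal_re]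
    exact ⟨rfl, sum_nonneg fun n _ => sq_nonneg _⟩
  · rw [hB]
    exact posSemidef_sum _ fun n _ => posSemidef_vecMulVec_self_star _
  · rw [hA_apply, hA_apply, Complex.ofReal_re, Complex.ofReal_re, hB]
    exact norm_sum_vecMulVec_mul_sq_le v w i j

/-- If `(A,B)` (equal diagonals) is pairwise completely positive, then `A` has
nonnegative (real) entries, `B` is positive semidefinite, and `A_{ij}A_{ji} ≥ |B_{ij}|²`. -/
theorem pcp_necessary_conditions {d : ℕ}
    (A B : Matrix (Fin d) (Fin d) ℂ) (hdiag : ∀ i, A i i = B i i)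
    (N : ℕ) (v w : Fin N → Fin d → ℂ)
    (hA : A = ∑ n, vecMulVec (fun i => v n i * star (v n i))
                    (star fun j => w n j * star (w n j)))
    (hB : B = ∑ n, vecMulVec (fun i => v n i * w n i)
                    (star fun j => v n j * w n j)) :
    (∀ i j, (A i j).im = 0 ∧ 0 ≤ (A i j).re) ∧
    B.PosSemidef ∧
    (∀ i j, ‖B i j‖ ^ 2 ≤ (A i j).re * (A j i).re) :=
  pcp_necessary_conditions_general A B N v w hA hB
end

section
/- If B = Σ_n |b_n⟩⟨b_n| where each b_n ∈ ℂ^d has at most k nonzero coordinates, then for the all-ones vector e ∈ ℝ^d one has ⟨e| M_{k-1}(B) |e⟩ = Σ_i (k−1)B_{ii} − Σ_{i≠j}|B_{ij}| ≥ 0. -/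
/-!
The triangle inequality gives `|B i j| ≤ ∑ n, |b n i| |b n j|`, so it suffices to treat a single
vector `x = |b n|`. If `x` has at most `k` nonzero coordinates, Cauchy–Schwarz on its support
gives `(∑ i, x i)² ≤ k ∑ i, x i²`, i.e. `∑_{i ≠ j} x i x j ≤ (k - 1) ∑ i, x i²`; summing over `n`
turns the right side into `(k - 1) ∑ i, B i i`.
-/

open Matrix Finset

section OffDiagonal

variable {ι : Type*} [Fintype ι]

theorem sum_sum_eq_sum_diag_add_sum_sum_filter_ne [DecidableEq ι] {M : Type*} [AddCommMonoid M]
    (g : ι → ι → M) :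
    ∑ i, ∑ j, g i j = ∑ i, g i i + ∑ i, ∑ j ∈ univ.filter (· ≠ i), g i j := by
  rw [← sum_add_distrib]
  refine sum_congr rfl fun i _ => ?_
  rw [filter_ne', add_sum_erase _ _ (mem_univ i)]

theorem sq_sum_le_mul_sum_sq_of_card_support_le {k : ℕ} (f : ι → ℝ)
    (hf : (univ.filter (f · ≠ 0)).card ≤ k) :
    (∑ i, f i) ^ 2 ≤ k * ∑ i, f i ^ 2 := by
  set s := univ.filter (f · ≠ 0)
  have hvanish : ∀ i ∉ s, f i = 0 := by simp [s]
  rw [← sum_subset (subset_univ s) fun i _ hi => hvanish i hi,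
    ← sum_subset (subset_univ s) fun i _ hi => by simp [hvanish i hi]]
  calc (∑ i ∈ s, f i) ^ 2 ≤ s.card * ∑ i ∈ s, f i ^ 2 := sq_sum_le_card_mul_sum_sq
    _ ≤ k * ∑ i ∈ s, f i ^ 2 := by gcongr

theorem sum_sum_filter_ne_mul_le_of_card_support_le [DecidableEq ι] {k : ℕ} (f : ι → ℝ)
    (hf : (univ.filter (f · ≠ 0)).card ≤ k) :
    ∑ i, ∑ j ∈ univ.filter (· ≠ i), f i * f j ≤ ((k : ℝ) - 1) * ∑ i, f i ^ 2 := by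
  have hsq : (∑ i, f i) ^ 2 = ∑ i, f i ^ 2 + ∑ i, ∑ j ∈ univ.filter (· ≠ i), f i * f j := by
    rw [sq, sum_mul_sum, sum_sum_eq_sum_diag_add_sum_sum_filter_ne]
    simp only [sq]
  linarith [sq_sum_le_mul_sum_sq_of_card_support_le f hf]

end OffDiagonal

section OuterProducts

variable {𝕜 ι κ : Type*} [RCLike 𝕜] [Fintype κ] (b : κ → ι → 𝕜)

theorem sum_vecMulVec_star_apply (i j : ι) :
    (∑ n, vecMulVec (b n) (star (b n))) i j = ∑ n, b n i * star (b n j) := by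
  simp [vecMulVec, Matrix.sum_apply]

theorem sum_vecMulVec_star_apply_self (i : ι) :
    (∑ n, vecMulVec (b n) (star (b n))) i i = ((∑ n, ‖b n i‖ ^ 2 : ℝ) : 𝕜) := by
  rw [sum_vecMulVec_star_apply, RCLike.ofReal_sum]
  exact sum_congr rfl fun n _ => by rw [RCLike.ofReal_pow]; exact RCLike.mul_conj (b n i)

theorem norm_sum_vecMulVec_star_apply_le (i j : ι) :
    ‖(∑ n, vecMulVec (b n) (star (b n))) i j‖ ≤ ∑ n, ‖b n i‖ * ‖b n j‖ := by
  rw [sum_vecMulVec_star_apply]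
  refine (norm_sum_le _ _).trans_eq (sum_congr rfl fun n _ => ?_)
  rw [norm_mul, norm_star]

end OuterProducts

/-- If `B = Σ_n |b_n⟩⟨b_n|` with each `b_n` supported on at most `k` coordinates,
then for the all-ones vector `e` one has
`⟨e| M_{k-1}(B) |e⟩ = Σ_i (k−1) B_{ii} − Σ_{i≠j} |B_{ij}| ≥ 0`. -/
theorem all_ones_quadratic_form_M_k_sub_one_nonneg {d k : ℕ}
    (B : Matrix (Fin d) (Fin d) ℂ)
    (N : ℕ) (b : Fin N → Fin d → ℂ)
    (hsupp : ∀ n, (univ.filter (fun i => b n i ≠ 0)).card ≤ k)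
    (hdec : B = ∑ n, vecMulVec (b n) (star (b n))) :
    (∑ i, ∑ j, (Matrix.of fun i j =>
        if i = j then ((k : ℝ) - 1) * ‖B i i‖ else -‖B i j‖ :
        Matrix (Fin d) (Fin d) ℝ) i j)
      = (∑ i, ((k : ℝ) - 1) * (B i i).re)
        - ∑ i, ∑ j ∈ univ.filter (· ≠ i), ‖B i j‖ ∧
    0 ≤ (∑ i, ((k : ℝ) - 1) * (B i i).re)
        - ∑ i, ∑ j ∈ univ.filter (· ≠ i), ‖B i j‖ := by
  have hdiag : ∀ i, B i i = ((∑ n, ‖b n i‖ ^ 2 : ℝ) : ℂ) := fun i => by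
    rw [hdec]
    exact sum_vecMulVec_star_apply_self b i
  have hdiag_norm : ∀ i, ‖B i i‖ = (B i i).re := fun i => by
    rw [hdiag, Complex.ofReal_re, Complex.norm_real, Real.norm_of_nonneg (by positivity)]
  refine ⟨?_, ?_⟩
  · simp only [of_apply]
    rw [sum_sum_eq_sum_diag_add_sum_sum_filter_ne,
      sub_eq_add_neg (∑ i, ((k : ℝ) - 1) * (B i i).re), ← sum_neg_distrib]
    congr 1
    · simp only [if_true, hdiag_norm]
    · refine sum_congr rfl fun i _ => ?_
      rw [← sum_neg_distrib]
      exact sum_congr rfl fun j hj => if_neg (mem_filter.mp hj).2.symm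
  · rw [sub_nonneg]
    calc ∑ i, ∑ j ∈ univ.filter (· ≠ i), ‖B i j‖
        ≤ ∑ i, ∑ j ∈ univ.filter (· ≠ i), ∑ n, ‖b n i‖ * ‖b n j‖ := by
          gcongr with i _ j _
          rw [hdec]
          exact norm_sum_vecMulVec_star_apply_le b i j
      _ = ∑ n, ∑ i, ∑ j ∈ univ.filter (· ≠ i), ‖b n i‖ * ‖b n j‖ := by
          rw [sum_comm]
          exact sum_congr rfl fun i _ => sum_comm
      _ ≤ ∑ n, ((k : ℝ) - 1) * ∑ i, ‖b n i‖ ^ 2 := by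
          gcongr with n
          refine sum_sum_filter_ne_mul_le_of_card_support_le _ ?_
          simpa only [ne_eq, norm_eq_zero] using hsupp n
      _ = ∑ i, ((k : ℝ) - 1) * (B i i).re := by
          simp only [hdiag, Complex.ofReal_re, ← mul_sum]
          rw [sum_comm]
end

section
/- The composition of two conjugate diagonal unitary covariant (CDUC) linear maps on M_d(ℂ) is again CDUC. More precisely, if Φ_i(X) = diag(A_i · diag(X)) + B̃_i ⊙ X for i = 1, 2, where B̃_i = B_i − diag(B_i), then Φ_1 ∘ Φ_2 (X) = diag(𝔄 · diag(X)) + 𝔅̃ ⊙ X with 𝔄 = A_1 A_2 and 𝔅̃ = (B_1 ⊙ B_2) − diag(B_1 ⊙ B_2). -/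
open Matrix Finset
open scoped ComplexOrder

/-- The action of a CDUC map with matrix pair `(A, B)`:
`Φ(X) = diag(A · diag X) + (B − diag B) ⊙ X`. -/
noncomputable def cducMap {d : ℕ} (A B : Matrix (Fin d) (Fin d) ℂ)
    (X : Matrix (Fin d) (Fin d) ℂ) : Matrix (Fin d) (Fin d) ℂ :=
  Matrix.diagonal (A.mulVec fun i => X i i)
    + (B - Matrix.diagonal fun i => B i i).hadamard X

/-- The composition of two CDUC maps is again CDUC, with
`𝔄 = A₁A₂` and `𝔅̃ = (B₁ ⊙ B₂) − diag(B₁ ⊙ B₂)`. -/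
theorem cduc_comp_cduc {d : ℕ}
    (A₁ B₁ A₂ B₂ : Matrix (Fin d) (Fin d) ℂ)
    (h₁ : ∀ i, A₁ i i = B₁ i i) (h₂ : ∀ i, A₂ i i = B₂ i i) :
    ∀ X, cducMap A₁ B₁ (cducMap A₂ B₂ X) = cducMap (A₁ * A₂) (B₁.hadamard B₂) X := by
  intro X
  ext i j
  by_cases h : i = j
  · subst h
    simp [cducMap, Matrix.hadamard, Matrix.add_apply, Matrix.sub_apply,
      Matrix.diagonal_apply, Matrix.mulVec, dotProduct, Matrix.mul_apply,
      Finset.sum_mul, Finset.mul_sum]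
    rw [Finset.sum_comm]
    simp [mul_assoc]
  · simp [cducMap, Matrix.hadamard, Matrix.add_apply, Matrix.sub_apply,
      Matrix.diagonal_apply, h]
    ring
end

section
/- Let A, B, C, D ∈ M_d(ℂ) satisfy: A and C have nonnegative entries, B and D are positive semidefinite, A_{ij}A_{ji} ≥ |B_{ij}|² and C_{ij}C_{ji} ≥ |D_{ij}|² for all i, j. Then the matrix 𝔅 := diag(AC) + B̃ ⊙ D̃ (where B̃ = B − diag(B), D̃ = D − diag(D), and diag(AC) is the diagonal part of the product AC) has factor width at most 2: it decomposes as 𝔅 = diag(A ⊙ C) + Σ_{i<j} P^{(ij)}, where each P^{(ij)} is a positive semidefinite matrix supported on the 2×2 principal submatrix indexed by {i,j} with entries P^{(ij)}_{ii} = A_{ij}C_{ji}, P^{(ij)}_{jj} = A_{ji}C_{ij}, P^{(ij)}_{ij} = B_{ij}D_{ij}, P^{(ij)}_{ji} = B_{ji}D_{ji}. -/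
open Matrix Finset
open scoped ComplexOrder

/-!
If `E` is the `2 × d` matrix with rows `eᵢ, eⱼ`, then
`P^{(ij)} = Eᴴ * !![A i j * C j i, B i j * D i j; conj (B i j * D i j), A j i * C i j] * E`, and this
`2 × 2` matrix is positive semidefinite because multiplying the two hypotheses gives
`|B i j D i j|² ≤ (A i j C j i)(A j i C i j)`. Summed over `i < j`, the diagonal entries of the
blocks add up to `diag (A C) - diag (A ⊙ C)` and the off-diagonal ones to `B ⊙ D - diag (B ⊙ D)`.
-/

theorem two_mul_mul_le_add_of_sq_le {a b t u v : ℝ} (ha : 0 ≤ a) (hb : 0 ≤ b)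
    (htab : t ^ 2 ≤ a * b) : 2 * (t * u * v) ≤ a * u ^ 2 + b * v ^ 2 := by
  have hsq : (2 * (t * u * v)) ^ 2 ≤ (a * u ^ 2 + b * v ^ 2) ^ 2 := by
    nlinarith [sq_nonneg (a * u ^ 2 - b * v ^ 2), mul_nonneg (sq_nonneg u) (sq_nonneg v)]
  exact (abs_le_of_sq_le_sq' hsq (by positivity)).2

theorem sum_sum_eq_sum_lt_add_swap_add_sum_diag {ι M : Type*} [Fintype ι] [LinearOrder ι]
    [AddCommMonoid M] (h : ι → ι → M) :
    ∑ i, ∑ j, h i j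
      = ∑ p : ι × ι, (if p.1 < p.2 then h p.1 p.2 + h p.2 p.1 else 0) + ∑ i, h i i := by
  have htrichotomy : ∀ p : ι × ι, h p.1 p.2 = (if p.1 < p.2 then h p.1 p.2 else 0)
      + (if p.2 < p.1 then h p.1 p.2 else 0) + (if p.1 = p.2 then h p.1 p.2 else 0) := by
    intro ⟨i, j⟩
    rcases lt_trichotomy i j with hij | rfl | hij
    · simp [hij, hij.ne, hij.not_gt]
    · simp
    · simp [hij, hij.ne', hij.not_gt]
  have hswap : ∑ p : ι × ι, (if p.1 < p.2 then h p.2 p.1 else 0)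
      = ∑ p : ι × ι, (if p.2 < p.1 then h p.1 p.2 else 0) :=
    Fintype.sum_equiv (Equiv.prodComm ι ι) _ _ fun _ => rfl
  have hdiag : ∑ p : ι × ι, (if p.1 = p.2 then h p.1 p.2 else 0) = ∑ i, h i i := by
    simp [Fintype.sum_prod_type]
  rw [← Fintype.sum_prod_type', Fintype.sum_congr _ _ htrichotomy]
  simp only [Finset.sum_add_distrib, ite_add_zero, hswap, hdiag]

namespace Matrix

theorem posSemidef_fin_two {𝕜 : Type*} [RCLike 𝕜] {a b p : 𝕜} (ha : 0 ≤ a) (hb : 0 ≤ b)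
    (hp : ‖p‖ ^ 2 ≤ ‖a‖ * ‖b‖) : !![a, p; star p, b].PosSemidef := by
  obtain ⟨a, ha₀, rfl⟩ := RCLike.nonneg_iff_exists_ofReal.mp ha
  obtain ⟨b, hb₀, rfl⟩ := RCLike.nonneg_iff_exists_ofReal.mp hb
  rw [RCLike.norm_ofReal, RCLike.norm_ofReal, abs_of_nonneg ha₀, abs_of_nonneg hb₀] at hp
  refine .of_dotProduct_mulVec_nonneg ?_ fun x => ?_
  · ext r s
    fin_cases r <;> fin_cases s <;> simp
  · have hform : star x ⬝ᵥ (!![(a : 𝕜), p; star p, b] *ᵥ x)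
        = ((a * ‖x 0‖ ^ 2 + b * ‖x 1‖ ^ 2 + 2 * RCLike.re (star (x 0) * p * x 1) : ℝ) : 𝕜) := by
      have hcross := RCLike.add_conj (star (x 0) * p * x 1)
      simp only [RCLike.star_def, map_mul, RCLike.conj_conj] at hcross
      simp only [dotProduct, mulVec, Fin.sum_univ_two, RCLike.star_def, Pi.star_apply,
        RCLike.ofReal_add, RCLike.ofReal_mul, RCLike.ofReal_pow, RCLike.ofReal_ofNat, of_apply,
        cons_val', cons_val_zero, cons_val_one, empty_val', cons_val_fin_one]
      linear_combination (a : 𝕜) * RCLike.conj_mul (x 0) + (b : 𝕜) * RCLike.conj_mul (x 1) + hcross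
    rw [hform, RCLike.ofReal_nonneg]
    have hre := RCLike.re_le_norm (-(star (x 0) * p * x 1))
    rw [norm_neg, norm_mul, norm_mul, norm_star, map_neg] at hre
    nlinarith [two_mul_mul_le_add_of_sq_le (u := ‖x 0‖) (v := ‖x 1‖) ha₀ hb₀ hp]

variable {n α : Type*} [DecidableEq n]

def pairBlock [Zero α] (i j : n) (a b p q : α) : Matrix n n α :=
  of fun k l =>
    if k = i ∧ l = i then a
    else if k = j ∧ l = j then b
    else if k = i ∧ l = j then p
    else if k = j ∧ l = i then q
    else 0

theorem pairBlock_apply_eq_zero [Zero α] {i j k l : n} (a b p q : α)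
    (h : k ∉ ({i, j} : Finset n) ∨ l ∉ ({i, j} : Finset n)) : pairBlock i j a b p q k l = 0 := by
  simp only [Finset.mem_insert, Finset.mem_singleton] at h
  simp only [pairBlock, of_apply]
  split_ifs <;> tauto

theorem pairBlock_eq_add [AddZeroClass α] {i j : n} (hij : i ≠ j) (a b p q : α) :
    pairBlock i j a b p q = (single i i a + single i j p) + (single j j b + single j i q) := by
  ext k l
  simp only [pairBlock, of_apply, add_apply, single_apply]
  aesop

theorem pairBlock_eq_conjTranspose_mul_mul [CommRing α] [StarRing α] {i j : n} (hij : i ≠ j)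
    (a b p q : α) :
    pairBlock i j a b p q =
      (of ![Pi.single i 1, Pi.single j 1] : Matrix (Fin 2) n α)ᴴ * !![a, p; q, b] *
        (of ![Pi.single i 1, Pi.single j 1] : Matrix (Fin 2) n α) := by
  ext k l
  simp only [pairBlock, of_apply, mul_apply, Fin.sum_univ_two, conjTranspose_apply, cons_val_zero,
    cons_val_one, cons_val', empty_val', cons_val_fin_one, Pi.single_apply]
  by_cases hki : k = i <;> by_cases hkj : k = j <;> by_cases hli : l = i <;> by_cases hlj : l = j <;>
    simp [hki, hkj, hli, hlj, hij, hij.symm]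

theorem posSemidef_pairBlock [Fintype n] {𝕜 : Type*} [RCLike 𝕜] {i j : n} (hij : i ≠ j)
    {a b p : 𝕜} (ha : 0 ≤ a) (hb : 0 ≤ b) (hp : ‖p‖ ^ 2 ≤ ‖a‖ * ‖b‖) :
    (pairBlock i j a b p (star p)).PosSemidef := by
  rw [pairBlock_eq_conjTranspose_mul_mul hij]
  exact (posSemidef_fin_two ha hb hp).conjTranspose_mul_mul_same _

theorem sum_pairBlock_lt [Fintype n] [LinearOrder n] [AddCommGroup α] (f g : n → n → α) :
    ∑ p : n × n,
        (if p.1 < p.2 then pairBlock p.1 p.2 (f p.1 p.2) (f p.2 p.1) (g p.1 p.2) (g p.2 p.1)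
          else 0)
      = diagonal (fun i => ∑ j, f i j) + of g
          - (diagonal (fun i => f i i) + diagonal fun i => g i i) := by
  set h : n → n → Matrix n n α := fun i j => single i i (f i j) + single i j (g i j)
  have hblock : ∀ p : n × n,
      (if p.1 < p.2 then pairBlock p.1 p.2 (f p.1 p.2) (f p.2 p.1) (g p.1 p.2) (g p.2 p.1) else 0)
        = if p.1 < p.2 then h p.1 p.2 + h p.2 p.1 else 0 := by
    intro p
    split_ifs with hp
    · exact pairBlock_eq_add hp.ne _ _ _ _
    · rfl
  have hrow : ∀ i, ∑ j, single i i (f i j) = single i i (∑ j, f i j) := fun i =>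
    (map_sum (singleAddMonoidHom (α := α) i i) _ _).symm
  have hfull : ∑ i, ∑ j, h i j = diagonal (fun i => ∑ j, f i j) + of g := by
    simp only [h, Finset.sum_add_distrib, hrow, sum_single_eq_diagonal, sum_sum_single]
  have hdiag : ∑ i, h i i = diagonal (fun i => f i i) + diagonal fun i => g i i := by
    simp only [h, Finset.sum_add_distrib, sum_single_eq_diagonal]
  rw [Fintype.sum_congr _ _ hblock, eq_sub_iff_add_eq, ← hfull, ← hdiag,
    sum_sum_eq_sum_lt_add_swap_add_sum_diag]

theorem sub_diagonal_hadamard_sub_diagonal [NonUnitalNonAssocRing α] (B D : Matrix n n α) :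
    (B - diagonal fun i => B i i) ⊙ (D - diagonal fun i => D i i)
      = B ⊙ D - diagonal fun i => B i i * D i i := by
  ext k l
  by_cases hkl : k = l
  · subst hkl; simp
  · simp [hkl]

end Matrix

/-- If `A, C` are entrywise nonnegative, `B, D` are PSD, and the PPT
inequalities `A_{ij}A_{ji} ≥ |B_{ij}|²`, `C_{ij}C_{ji} ≥ |D_{ij}|²` hold, then
`𝔅 = diag(AC) + B̃ ⊙ D̃` decomposes as `diag(A ⊙ C) + Σ_{i<j} P^{(ij)}` with each `P^{(ij)}`
positive semidefinite and supported on the `{i,j}` principal submatrix; in particular `𝔅`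
has factor width at most 2. -/
theorem composition_B_matrix_factor_width_two {d : ℕ}
    (A B C D : Matrix (Fin d) (Fin d) ℂ)
    (hA : ∀ i j, (A i j).im = 0 ∧ 0 ≤ (A i j).re)
    (hC : ∀ i j, (C i j).im = 0 ∧ 0 ≤ (C i j).re)
    (hB : B.PosSemidef) (hD : D.PosSemidef)
    (hAB : ∀ i j, ‖B i j‖ ^ 2 ≤ (A i j * A j i).re)
    (hCD : ∀ i j, ‖D i j‖ ^ 2 ≤ (C i j * C j i).re) :
    -- the 2×2-supported blocks
    let P : Fin d → Fin d → Matrix (Fin d) (Fin d) ℂ := fun i j =>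
      Matrix.of fun k l =>
        if k = i ∧ l = i then A i j * C j i
        else if k = j ∧ l = j then A j i * C i j
        else if k = i ∧ l = j then B i j * D i j
        else if k = j ∧ l = i then B j i * D j i
        else 0
    (∀ i j, i < j → (P i j).PosSemidef) ∧
    (∀ i j, i < j → ∀ k l, (k ∉ ({i, j} : Finset (Fin d)) ∨ l ∉ ({i, j} : Finset (Fin d)))
      → P i j k l = 0) ∧
    Matrix.diagonal (fun i => (A * C) i i)
        + (B - Matrix.diagonal fun i => B i i).hadamard (D - Matrix.diagonal fun i => D i i)
      = Matrix.diagonal (fun i => A i i * C i i)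
        + ∑ p : Fin d × Fin d, if p.1 < p.2 then P p.1 p.2 else 0 := by
  intro P
  have hP : ∀ i j, P i j =
      pairBlock i j (A i j * C j i) (A j i * C i j) (B i j * D i j) (B j i * D j i) :=
    fun _ _ => rfl
  have hA₀ : ∀ i j, 0 ≤ A i j := fun i j => Complex.le_def.mpr ⟨(hA i j).2, (hA i j).1.symm⟩
  have hC₀ : ∀ i j, 0 ≤ C i j := fun i j => Complex.le_def.mpr ⟨(hC i j).2, (hC i j).1.symm⟩
  refine ⟨fun i j hij => ?_, fun i j _ k l hkl => pairBlock_apply_eq_zero _ _ _ _ hkl, ?_⟩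
  · have hstar : B j i * D j i = star (B i j * D i j) := by
      rw [star_mul', hB.1.apply, hD.1.apply]
    have hnorm : ‖B i j * D i j‖ ^ 2 ≤ ‖A i j * C j i‖ * ‖A j i * C i j‖ :=
      calc ‖B i j * D i j‖ ^ 2 = ‖B i j‖ ^ 2 * ‖D i j‖ ^ 2 := by rw [norm_mul, mul_pow]
        _ ≤ ‖A i j * A j i‖ * ‖C i j * C j i‖ :=
          mul_le_mul ((hAB i j).trans (Complex.re_le_norm _))
            ((hCD i j).trans (Complex.re_le_norm _)) (by positivity) (by positivity)
        _ = ‖A i j * C j i‖ * ‖A j i * C i j‖ := by simp only [norm_mul]; ring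
    rw [hP, hstar]
    exact posSemidef_pairBlock hij.ne (mul_nonneg (hA₀ i j) (hC₀ j i))
      (mul_nonneg (hA₀ j i) (hC₀ i j)) hnorm
  · simp only [hP]
    rw [sum_pairBlock_lt (fun i j => A i j * C j i) (fun i j => B i j * D i j),
      sub_diagonal_hadamard_sub_diagonal]
    change diagonal (fun i => ∑ j, A i j * C j i) + (B ⊙ D - _) = _ + (_ + B ⊙ D - _)
    abel
end

section
/- If D is a diagonal matrix with strictly positive diagonal entries and the matrix DBD (for hermitian B ∈ M_d(ℂ)) has factor width at most 2, then B has factor width at most 2. -/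
open Matrix Finset
open scoped ComplexOrder

/-- If `D` is a positive diagonal matrix and `DBD` has factor width at most 2
(for hermitian `B`), then `B` has factor width at most 2. -/
theorem factor_width_two_of_scaled {d : ℕ}
    (B : Matrix (Fin d) (Fin d) ℂ) (hB : B.IsHermitian)
    (D : Fin d → ℝ) (hD : ∀ i, 0 < D i)
    (h : ∃ (N : ℕ) (v : Fin N → Fin d → ℂ),
      (∀ n, (univ.filter (fun i => v n i ≠ 0)).card ≤ 2) ∧
      (Matrix.of fun i j => (D i : ℂ) * B i j * (D j : ℂ))
        = ∑ n, vecMulVec (v n) (star (v n))) :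
    ∃ (N : ℕ) (v : Fin N → Fin d → ℂ),
      (∀ n, (univ.filter (fun i => v n i ≠ 0)).card ≤ 2) ∧
      B = ∑ n, vecMulVec (v n) (star (v n)) := by
  obtain ⟨N, v, hcard, hsum⟩ := h
  have hDne : ∀ i, (D i : ℂ) ≠ 0 := fun i => by
    exact_mod_cast (hD i).ne'
  refine ⟨N, fun n i => (D i : ℂ)⁻¹ * v n i, ?_, ?_⟩
  · intro n
    refine le_trans (le_of_eq ?_) (hcard n)
    congr 1
    ext i
    simp [mul_ne_zero_iff, hDne i]
    exact fun _ => (hD i).ne'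
  · ext i j
    have h1 := congrFun (congrFun hsum i) j
    simp only [Matrix.sum_apply, vecMulVec_apply, Pi.star_apply, of_apply] at h1 ⊢
    have : B i j = (D i : ℂ)⁻¹ * ((D i : ℂ) * B i j * (D j : ℂ)) * (D j : ℂ)⁻¹ := by
      rw [eq_comm]
      calc (D i : ℂ)⁻¹ * ((D i : ℂ) * B i j * (D j : ℂ)) * (D j : ℂ)⁻¹
          = B i j * ((D i : ℂ) * (D i : ℂ)⁻¹) * ((D j : ℂ) * (D j : ℂ)⁻¹) := by ring
        _ = B i j := by rw [mul_inv_cancel₀ (hDne i), mul_inv_cancel₀ (hDne j)]; ring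
    rw [this, h1, Finset.mul_sum, Finset.sum_mul]
    refine Finset.sum_congr rfl fun n _ => ?_
    simp only [star_mul', star_inv₀, Complex.star_def, Complex.conj_ofReal]
    ring
end
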